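/- Let C and ℓ be integers with 2 ≤ ℓ < C, let Π ∈ (0,1], and let r_1, …, r_ℓ be nonnegative reals with Σ_{i=1}^{ℓ} r_i·Π ≤ 1. For 1 ≤ k ≤ ℓ define the top-k-aware Fano scaling function S_{F_k}(Π) = −Σ_{i=1}^{k} (r_i Π)·log₂(r_i Π) − (1 − Σ_{i=1}^{k} r_i Π)·log₂(1 − Σ_{i=1}^{k} r_i Π) + (1 − Σ_{i=1}^{k} r_i Π)·log₂(C − k), with the convention 0·log₂ 0 = 0. Then S_{F_ℓ}(Π) ≤ S_{F_{ℓ−1}}(Π): merging the ℓ-th candidate's probability mass r_ℓ Π into the uniformly distributed tail over C−ℓ+1 states can only increase the entropy. -/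

import Mathlib

/-- The top-`k`-aware Fano scaling function
`S_{F_k}(Π) = -∑_{i=1}^k (rᵢΠ)·log₂(rᵢΠ) - (1-∑_{i=1}^k rᵢΠ)·log₂(1-∑_{i=1}^k rᵢΠ)
              + (1-∑_{i=1}^k rᵢΠ)·log₂(C-k)`
(with the convention `0·log₂ 0 = 0`, automatic since `Real.logb 2 0 = 0`). -/
noncomputable def SFk (C k : ℕ) (r : ℕ → ℝ) (P : ℝ) : ℝ :=
  -(∑ i ∈ Finset.Icc 1 k, r i * P * Real.logb 2 (r i * P))
    - (1 - ∑ i ∈ Finset.Icc 1 k, r i * P) * Real.logb 2 (1 - ∑ i ∈ Finset.Icc 1 k, r i * P)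
    + (1 - ∑ i ∈ Finset.Icc 1 k, r i * P) * Real.logb 2 ((C : ℝ) - (k : ℝ))

/-!
Up to the factor `1 / log 2`, the last two terms of `S_{F_k}` are `-t log (t / (C - k))`, where
`t = 1 - ∑_{i ≤ k} rᵢΠ` is the tail mass spread uniformly over `C - k` states. Passing from `k = ℓ`
to `k = ℓ - 1` replaces `-p log p - q log (q / M)` (with `p = r_ℓ Π`, `q` the old tail and
`M = C - ℓ`) by `-(p + q) log ((p + q) / (1 + M))`, and the two-term log-sum inequality
`(a + b) log ((a + b) / (m + n)) ≤ a log (a / m) + b log (b / n)`, i.e. Jensen for the convex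
function `x log x`, says this can only increase the value.
-/

open Real Finset

theorem mul_logb_div {b : ℝ} (x : ℝ) {y : ℝ} (hy : y ≠ 0) :
    x * logb b (x / y) = x * logb b x - x * logb b y := by
  rcases eq_or_ne x 0 with rfl | hx
  · simp
  · rw [logb_div hx hy, mul_sub]

theorem add_mul_log_div_add_le {a b m n : ℝ} (ha : 0 ≤ a) (hb : 0 ≤ b) (hm : 0 < m)
    (hn : 0 < n) : (a + b) * log ((a + b) / (m + n)) ≤ a * log (a / m) + b * log (b / n) := by
  have hmn : 0 < m + n := add_pos hm hn
  have jensen := convexOn_mul_log.2 (Set.mem_Ici.2 (div_nonneg ha hm.le))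
    (Set.mem_Ici.2 (div_nonneg hb hn.le)) (div_nonneg hm.le hmn.le) (div_nonneg hn.le hmn.le)
    (by field_simp)
  have hmean : m / (m + n) * (a / m) + n / (m + n) * (b / n) = (a + b) / (m + n) := by
    field_simp
  simp only [smul_eq_mul, hmean] at jensen
  have hrhs : m / (m + n) * (a / m * log (a / m)) + n / (m + n) * (b / n * log (b / n))
      = (a * log (a / m) + b * log (b / n)) / (m + n) := by
    field_simp
  rw [hrhs, div_mul_eq_mul_div, div_le_div_iff_of_pos_right hmn] at jensen
  exact jensen

theorem add_mul_logb_div_add_le {β a b m n : ℝ} (hβ : 1 < β) (ha : 0 ≤ a) (hb : 0 ≤ b)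
    (hm : 0 < m) (hn : 0 < n) :
    (a + b) * logb β ((a + b) / (m + n)) ≤ a * logb β (a / m) + b * logb β (b / n) := by
  simp only [logb, ← mul_div_assoc, ← add_div]
  exact div_le_div_of_nonneg_right (add_mul_log_div_add_le ha hb hm hn) (log_pos hβ).le

theorem SFk_eq_of_lt {C k : ℕ} (hk : k < C) (r : ℕ → ℝ) (P : ℝ) :
    SFk C k r P = -(∑ i ∈ Icc 1 k, r i * P * logb 2 (r i * P))
      - (1 - ∑ i ∈ Icc 1 k, r i * P) * logb 2 ((1 - ∑ i ∈ Icc 1 k, r i * P) / ((C : ℝ) - k)) := by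
  have hCk : (C : ℝ) - k ≠ 0 := sub_ne_zero.2 (by exact_mod_cast hk.ne')
  rw [SFk, mul_logb_div _ hCk]
  ring

theorem stmt_10_general (C ℓ : ℕ) (hℓC : ℓ < C)
    (P : ℝ) (hP0 : 0 < P)
    (r : ℕ → ℝ) (hr : ∀ i, 0 ≤ r i)
    (hsum : ∑ i ∈ Finset.Icc 1 ℓ, r i * P ≤ 1) :
    SFk C ℓ r P ≤ SFk C (ℓ - 1) r P := by
  obtain _ | n := ℓ
  · exact le_rfl
  rw [Nat.add_sub_cancel, SFk_eq_of_lt hℓC, SFk_eq_of_lt (Nat.lt_of_succ_lt hℓC),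
    sum_Icc_succ_top (by omega), sum_Icc_succ_top (by omega)]
  rw [sum_Icc_succ_top (by omega)] at hsum
  set s := ∑ i ∈ Icc 1 n, r i * P
  set p := r (n + 1) * P
  have hM : (0 : ℝ) < C - (n + 1 : ℕ) := sub_pos.2 (by exact_mod_cast hℓC)
  have logSum := add_mul_logb_div_add_le one_lt_two (mul_nonneg (hr (n + 1)) hP0.le)
    (sub_nonneg.2 hsum) one_pos hM
  have hmass : p + (1 - (s + p)) = 1 - s := by ring
  have hstates : 1 + ((C : ℝ) - (n + 1 : ℕ)) = C - n := by push_cast; ring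
  rw [hmass, hstates, div_one] at logSum
  linarith

/-- For integers `2 ≤ ℓ < C`, `Π ∈ (0,1]` and nonnegative ratios `rᵢ` with
`∑_{i=1}^ℓ rᵢ·Π ≤ 1`, we have `S_{F_ℓ}(Π) ≤ S_{F_{ℓ-1}}(Π)`: merging the `ℓ`-th candidate's
probability mass into the uniformly distributed tail can only increase the entropy. -/
theorem stmt_10 (C ℓ : ℕ) (hℓ : 2 ≤ ℓ) (hℓC : ℓ < C)
    (P : ℝ) (hP0 : 0 < P) (hP1 : P ≤ 1)
    (r : ℕ → ℝ) (hr : ∀ i, 0 ≤ r i)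
    (hsum : ∑ i ∈ Finset.Icc 1 ℓ, r i * P ≤ 1) :
    SFk C ℓ r P ≤ SFk C (ℓ - 1) r P :=
  stmt_10_general C ℓ hℓC P hP0 r hr hsum
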